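/- arXiv:2404.10962 — 2 statements merged into one kernel-verified Lean document; each statement's English description precedes it below -/
import Mathlib

section
/- Let G be a connected finite simple graph on n ≥ 2 vertices. The dominating graph D(G) is Eulerian if and only if n is even, n ≥ 4, and G is the cocktail party graph on n vertices (the complete graph K_n with a perfect matching removed). -/
open SimpleGraph

/-- `D` is a dominating set of `G`: every vertex not in `D` has a neighbour in `D`. -/
def IsDomSet {V : Type*} (G : SimpleGraph V) (D : Set V) : Prop :=
  ∀ v ∉ D, ∃ u ∈ D, G.Adj u v

/-- The dominating graph of `G`: vertices are dominating sets of `G`, two dominating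
sets are adjacent iff their symmetric difference has exactly one element. -/
def DomGraph {V : Type*} (G : SimpleGraph V) :
    SimpleGraph {D : Set V // IsDomSet G D} where
  Adj A B := (symmDiff A.1 B.1).ncard = 1
  symm := ⟨fun A B h => by
    have h' : (symmDiff A.1 B.1).ncard = 1 := h
    show (symmDiff B.1 A.1).ncard = 1
    rwa [symmDiff_comm]⟩
  loopless := ⟨fun A h => by
    have h' : (symmDiff A.1 A.1).ncard = 1 := h
    simp [symmDiff_self, Set.bot_eq_empty] at h'⟩

/-- The `k`-dominating graph of `G`: vertices are dominating sets of `G` of cardinality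
at most `k`, two such sets are adjacent iff their symmetric difference has exactly one
element. -/
def KDomGraph {V : Type*} (G : SimpleGraph V) (k : ℕ) :
    SimpleGraph {D : Set V // IsDomSet G D ∧ D.ncard ≤ k} where
  Adj A B := (symmDiff A.1 B.1).ncard = 1
  symm := ⟨fun A B h => by
    have h' : (symmDiff A.1 B.1).ncard = 1 := h
    show (symmDiff B.1 A.1).ncard = 1
    rwa [symmDiff_comm]⟩
  loopless := ⟨fun A h => by
    have h' : (symmDiff A.1 A.1).ncard = 1 := h
    simp [symmDiff_self, Set.bot_eq_empty] at h'⟩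

/-- A graph is Eulerian iff every vertex has even degree and any two edges lie in the
same connected component (i.e. at most one component contains an edge). -/
def IsEulerian {W : Type*} (H : SimpleGraph W) : Prop :=
  (∀ v : W, Even (H.neighborSet v).ncard) ∧
  ∀ u v x y : W, H.Adj u v → H.Adj x y → H.Reachable u x

/-- `G` is a cocktail party graph: the complete graph with a perfect matching removed,
i.e. there is a fixed-point-free involutive pairing `f` of the vertices such that two
distinct vertices are adjacent iff they are not paired. -/
def IsCocktailParty {V : Type*} (G : SimpleGraph V) : Prop :=
  ∃ f : V → V, Function.Involutive f ∧ (∀ v, f v ≠ v) ∧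
    ∀ u v, G.Adj u v ↔ u ≠ v ∧ f u ≠ v

/-!
Toggling a vertex `v` of a dominating set `D` keeps it dominating unless `v ∈ D` and `D \ {v}`
is not dominating (`v` is critical), so `D` has degree `n - #crit(D)` in `D(G)`; and `D(G)` is
connected, since every dominating set grows to `V` one vertex at a time. So for even `n`, `D(G)`
is Eulerian iff every `#crit(D)` is even. A set fails to dominate iff it lies in the neighbourhood
`N(u)` of some `u` in the complement `Gᶜ`.

For the cocktail party graph the `N(u)` are singletons, so `crit(D)` is `D` if `|D| = 2` and
empty otherwise. Conversely, `D = V` forces `n` even and `D = {v}` forces `N(v) ≠ ∅`. If `a` is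
the maximum degree of `Gᶜ`, a set of size `a + 1` is critical at `w` iff removing `w` leaves some
`N(z)`; evenness then produces, for a vertex `y` of degree `a`, a twin `x ∈ N(y)` with
`N(x) ∪ {x} = N(y) ∪ {y}`, and shows that every vertex outside `N(y) ∪ {y}` is `Gᶜ`-adjacent
to all of `N(y) \ {x}`. Were `a ≥ 2`, the nonempty set `N(y) \ {x}` would have no `G`-edge
leaving it, against connectivity. Hence `Gᶜ` is a perfect matching.
-/

section

variable {V : Type*} {G : SimpleGraph V} {D E : Set V} {u v : V}

theorem IsDomSet.mono (hD : IsDomSet G D) (hDE : D ⊆ E) : IsDomSet G E := fun v hv =>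
  let ⟨u, hu, huv⟩ := hD v fun h => hv (hDE h)
  ⟨u, hDE hu, huv⟩

theorem isDomSet_univ : IsDomSet G Set.univ := fun _ hv => absurd (Set.mem_univ _) hv

theorem not_isDomSet_iff : ¬ IsDomSet G D ↔ ∃ u, D ⊆ Gᶜ.neighborSet u := by
  simp only [IsDomSet, not_forall, not_exists, not_and, exists_prop, Set.subset_def,
    mem_neighborSet, compl_adj]
  constructor
  · rintro ⟨u, hu, h⟩
    exact ⟨u, fun d hd => ⟨fun e => hu (e ▸ hd), fun hud => h d hd hud.symm⟩⟩
  · rintro ⟨u, h⟩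
    exact ⟨u, fun hu => (h u hu).1 rfl, fun d hd hdu => (h d hd).2 hdu.symm⟩

def criticalSet (G : SimpleGraph V) (D : Set V) : Set V :=
  {v | v ∈ D ∧ ¬ IsDomSet G (D \ {v})}

theorem mem_criticalSet_iff :
    v ∈ criticalSet G D ↔ v ∈ D ∧ ∃ u, D \ {v} ⊆ Gᶜ.neighborSet u :=
  and_congr_right fun _ => not_isDomSet_iff

theorem IsDomSet.symmDiff_singleton_iff (hD : IsDomSet G D) :
    IsDomSet G (symmDiff D {v}) ↔ v ∉ criticalSet G D := by
  by_cases hv : v ∈ D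
  · have : symmDiff D {v} = D \ {v} := by
      ext w; by_cases hw : w = v <;> simp [Set.mem_symmDiff, hw, hv]
    simp [criticalSet, hv, this]
  · have : symmDiff D {v} = insert v D := by
      ext w; by_cases hw : w = v <;> simp [Set.mem_symmDiff, hw, hv]
    simp [criticalSet, hv, this, hD.mono (Set.subset_insert v D)]

theorem DomGraph.adj_iff {A B : {D : Set V // IsDomSet G D}} :
    (DomGraph G).Adj A B ↔ ∃ v, B.1 = symmDiff A.1 {v} := by
  change (symmDiff A.1 B.1).ncard = 1 ↔ _
  rw [Set.ncard_eq_one]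
  constructor
  · rintro ⟨v, hv⟩
    exact ⟨v, by rw [← hv, symmDiff_symmDiff_cancel_left]⟩
  · rintro ⟨v, hv⟩
    exact ⟨v, by rw [hv, symmDiff_symmDiff_cancel_left]⟩

theorem DomGraph.reachable_of_subset [Finite V] {hD : IsDomSet G D} {hE : IsDomSet G E}
    (hDE : D ⊆ E) : (DomGraph G).Reachable ⟨D, hD⟩ ⟨E, hE⟩ := by
  induction h : (E \ D).ncard generalizing D with
  | zero =>
    obtain rfl : D = E := hDE.antisymm (Set.sdiff_eq_empty.1 ((Set.ncard_eq_zero).1 h))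
    rfl
  | succ k ih =>
    obtain ⟨v, hvE, hvD⟩ : (E \ D).Nonempty := Set.nonempty_of_ncard_ne_zero (by omega)
    have hstep : (DomGraph G).Adj ⟨D, hD⟩ ⟨insert v D, hD.mono (Set.subset_insert v D)⟩ :=
      DomGraph.adj_iff.2 ⟨v, by ext w; by_cases hw : w = v <;> simp [Set.mem_symmDiff, hw, hvD]⟩
    refine hstep.reachable.trans (ih (Set.insert_subset hvE hDE) ?_)
    rw [Set.insert_eq, Set.union_comm, ← Set.sdiff_sdiff,
      Set.ncard_sdiff_singleton_of_mem (show v ∈ E \ D from ⟨hvE, hvD⟩), h]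
    rfl

theorem DomGraph.preconnected [Finite V] : (DomGraph G).Preconnected := fun A B =>
  (reachable_of_subset (Set.subset_univ A.1) (hE := isDomSet_univ)).trans
    (reachable_of_subset (Set.subset_univ B.1)).symm

theorem ncard_neighborSet_domGraph_add_ncard_criticalSet [Fintype V]
    (A : {D : Set V // IsDomSet G D}) :
    ((DomGraph G).neighborSet A).ncard + (criticalSet G A.1).ncard = Fintype.card V := by
  obtain ⟨D, hD⟩ := A
  have hcompl : (criticalSet G D)ᶜ.ncard = ((DomGraph G).neighborSet ⟨D, hD⟩).ncard := by
    refine Set.ncard_congr (fun v hv => ⟨symmDiff D {v}, hD.symmDiff_singleton_iff.2 hv⟩)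
      (fun v _ => DomGraph.adj_iff.2 ⟨v, rfl⟩) (fun v w _ _ h => ?_) ?_
    · simpa using congrArg (fun B => symmDiff D B.1) h
    · rintro ⟨B, hB⟩ hadj
      obtain ⟨v, rfl⟩ := DomGraph.adj_iff.1 hadj
      exact ⟨v, hD.symmDiff_singleton_iff.1 hB, rfl⟩
  rw [← hcompl, Set.ncard_compl_add_ncard, Nat.card_eq_fintype_card]

theorem isEulerian_domGraph_iff_of_even [Fintype V] (hev : Even (Fintype.card V)) :
    IsEulerian (DomGraph G) ↔ ∀ D, IsDomSet G D → Even (criticalSet G D).ncard := by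
  have hpar (A : {D : Set V // IsDomSet G D}) :
      Even ((DomGraph G).neighborSet A).ncard ↔ Even (criticalSet G A.1).ncard :=
    Nat.even_add.1 ((ncard_neighborSet_domGraph_add_ncard_criticalSet A).symm ▸ hev)
  constructor
  · exact fun h D hD => (hpar ⟨D, hD⟩).1 (h.1 _)
  · exact fun h =>
      ⟨fun A => (hpar A).2 (h A.1 A.2), fun u _ x _ _ _ => DomGraph.preconnected u x⟩

theorem criticalSet_univ_eq_empty (hG : ∀ v, ∃ w, G.Adj v w) :
    criticalSet G Set.univ = ∅ := by
  refine Set.eq_empty_of_forall_notMem fun v ⟨_, hv⟩ => hv fun u hu => ?_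
  obtain rfl : u = v := by simpa using hu
  obtain ⟨w, hw⟩ := hG u
  exact ⟨w, by simpa using hw.ne', hw.symm⟩

theorem even_card_of_isEulerian_domGraph [Fintype V] (hG : ∀ v, ∃ w, G.Adj v w)
    (h : IsEulerian (DomGraph G)) : Even (Fintype.card V) := by
  have := ncard_neighborSet_domGraph_add_ncard_criticalSet ⟨Set.univ, isDomSet_univ (G := G)⟩
  rw [criticalSet_univ_eq_empty hG, Set.ncard_empty, add_zero] at this
  exact this ▸ h.1 _

theorem nonempty_neighborSet_compl_of_even_ncard_criticalSet
    (hcrit : ∀ D, IsDomSet G D → Even (criticalSet G D).ncard) (v : V) :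
    (Gᶜ.neighborSet v).Nonempty := by
  by_contra! h
  have hdom : IsDomSet G {v} := not_not.1 fun hv => by
    obtain ⟨u, hu⟩ := not_isDomSet_iff.1 hv
    have : u ∈ Gᶜ.neighborSet v := (show Gᶜ.Adj u v from hu rfl).symm
    simp [h] at this
  have hv : v ∈ criticalSet G {v} := mem_criticalSet_iff.2 ⟨rfl, v, by simp⟩
  have : criticalSet G {v} = {v} :=
    Set.Subset.antisymm (fun w hw => hw.1) (Set.singleton_subset_iff.2 hv)
  simpa [this] using hcrit _ hdom

/-- For `H = Gᶜ`, with `a` the maximum degree of `Gᶜ`, this is what evenness of the critical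
sets says about dominating sets of size `a + 1`. -/
def NeighborExchange (H : SimpleGraph V) (a : ℕ) : Prop :=
  ∀ y s, (H.neighborSet y).ncard = a → s ∉ H.neighborSet y →
    ∃ w ∈ H.neighborSet y, ∃ z, H.neighborSet z = insert s (H.neighborSet y \ {w})

theorem neighborExchange_of_even_ncard_criticalSet [Finite V]
    (hcrit : ∀ D, IsDomSet G D → Even (criticalSet G D).ncard) {a : ℕ}
    (hmax : ∀ v, (Gᶜ.neighborSet v).ncard ≤ a) : NeighborExchange Gᶜ a := by
  intro y s hy hs
  set D := insert s (Gᶜ.neighborSet y)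
  have hD : D.ncard = a + 1 := by rw [Set.ncard_insert_of_notMem hs, hy]
  have hdom : IsDomSet G D := not_not.1 fun h => by
    obtain ⟨u, hu⟩ := not_isDomSet_iff.1 h
    have := Set.ncard_le_ncard hu
    have := hmax u
    omega
  have hsD : s ∈ criticalSet G D :=
    mem_criticalSet_iff.2 ⟨Set.mem_insert s _, y, (Set.insert_sdiff_self_of_notMem hs).le⟩
  have htwo : 1 < (criticalSet G D).ncard := by
    have := (Set.ncard_pos).2 ⟨s, hsD⟩
    obtain ⟨k, hk⟩ := hcrit D hdom
    omega
  obtain ⟨w, hwD', hws⟩ := Set.exists_ne_of_one_lt_ncard htwo s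
  obtain ⟨hwD, z, hz⟩ := mem_criticalSet_iff.1 hwD'
  refine ⟨w, (Set.mem_insert_iff.1 hwD).resolve_left hws, z, ?_⟩
  rw [Set.insert_sdiff_singleton_comm hws.symm]
  refine (Set.eq_of_subset_of_ncard_le hz ?_).symm
  rw [Set.ncard_sdiff_singleton_of_mem hwD, hD]
  exact hmax z

theorem SimpleGraph.Connected.exists_adj_of_mem_of_notMem (hG : G.Connected) {S : Set V}
    (hu : u ∈ S) (hv : v ∉ S) : ∃ a ∈ S, ∃ b ∉ S, G.Adj a b := by
  obtain ⟨d, -, hd⟩ := (hG u v).some.exists_boundary_dart S hu hv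
  exact ⟨d.fst, hd.1, d.snd, hd.2, d.adj⟩

namespace NeighborExchange

variable {H : SimpleGraph V} {a : ℕ} {x y s : V}

theorem exists_twin (hex : NeighborExchange H a) (hy : (H.neighborSet y).ncard = a) :
    ∃ x ∈ H.neighborSet y, H.neighborSet x = insert y (H.neighborSet y \ {x}) := by
  obtain ⟨w, hw, z, hz⟩ := hex y y hy H.notMem_neighborSet_self
  have hzy : z ∈ H.neighborSet y :=
    H.adj_symm (show y ∈ H.neighborSet z from hz ▸ Set.mem_insert y _)
  obtain rfl : z = w := by
    by_contra hzw
    exact H.notMem_neighborSet_self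
      (show z ∈ H.neighborSet z from hz ▸ Set.mem_insert_of_mem y ⟨hzy, hzw⟩)
  exact ⟨z, hw, hz⟩

theorem exists_neighborSet_eq_insert [Finite V] (hex : NeighborExchange H a)
    (hy : (H.neighborSet y).ncard = a) (hx : x ∈ H.neighborSet y)
    (htwin : H.neighborSet x = insert y (H.neighborSet y \ {x}))
    (hs : s ∉ insert y (H.neighborSet y)) :
    ∃ z ∉ insert y (H.neighborSet y), H.neighborSet z = insert s (H.neighborSet y \ {x}) := by
  have hyM : y ∉ H.neighborSet y \ {x} := fun h => H.notMem_neighborSet_self h.1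
  have hxa : (H.neighborSet x).ncard = a := by
    have := (Set.ncard_pos).2 ⟨x, hx⟩
    rw [htwin, Set.ncard_insert_of_notMem hyM, Set.ncard_sdiff_singleton_of_mem hx, hy]
    omega
  have hsx : s ∉ H.neighborSet x := by
    rw [htwin]
    exact fun h => hs (Set.insert_subset_insert Set.sdiff_subset h)
  obtain ⟨w, -, z, hz⟩ := hex x s hxa hsx
  obtain rfl | hwy := eq_or_ne w y
  · rw [htwin, Set.insert_sdiff_self_of_notMem hyM] at hz
    refine ⟨z, ?_, hz⟩
    rintro (rfl | hzy)
    · exact hs (Set.mem_insert_of_mem _ (hz ▸ Set.mem_insert s _))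
    · have : w ∈ H.neighborSet z := H.adj_symm hzy
      rw [hz] at this
      rcases this with rfl | h
      · exact hs (Set.mem_insert _ _)
      · exact hyM h
  · exfalso
    have hzy : z ∈ H.neighborSet y :=
      H.adj_symm (show y ∈ H.neighborSet z from
        hz ▸ Set.mem_insert_of_mem s ⟨htwin ▸ Set.mem_insert y _, hwy.symm⟩)
    obtain rfl | hzx := eq_or_ne z x
    · exact hsx (hz ▸ Set.mem_insert s _)
    · have hxz : x ∈ H.neighborSet z :=
        H.adj_symm (show z ∈ H.neighborSet x from
          htwin ▸ Set.mem_insert_of_mem y ⟨hzy, hzx⟩)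
      rw [hz] at hxz
      rcases hxz with rfl | h
      · exact hs (Set.mem_insert_of_mem y hx)
      · exact H.notMem_neighborSet_self h.1

theorem sdiff_subset_neighborSet [Finite V] (hex : NeighborExchange H a)
    (hy : (H.neighborSet y).ncard = a) (hx : x ∈ H.neighborSet y)
    (htwin : H.neighborSet x = insert y (H.neighborSet y \ {x}))
    (hs : s ∉ insert y (H.neighborSet y)) :
    H.neighborSet y \ {x} ⊆ H.neighborSet s := by
  obtain ⟨z, hz, hzN⟩ := hex.exists_neighborSet_eq_insert hy hx htwin hs
  obtain ⟨z', hz', hz'N⟩ := hex.exists_neighborSet_eq_insert hy hx htwin hz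
  have : z' ∈ H.neighborSet z :=
    H.adj_symm (show z ∈ H.neighborSet z' from hz'N ▸ Set.mem_insert z _)
  rw [hzN] at this
  obtain rfl : z' = s := this.resolve_right fun h => hz' (Set.mem_insert_of_mem y h.1)
  exact hz'N ▸ Set.subset_insert z _

theorem le_one [Finite V] (hex : NeighborExchange H a) (hconn : Hᶜ.Connected)
    (hy : (H.neighborSet y).ncard = a) : a ≤ 1 := by
  obtain ⟨x, hx, htwin⟩ := hex.exists_twin hy
  by_contra! ha
  set M := H.neighborSet y \ {x}
  obtain ⟨m, hm⟩ : M.Nonempty :=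
    Set.nonempty_of_ncard_ne_zero (by rw [Set.ncard_sdiff_singleton_of_mem hx]; omega)
  have hyM : y ∉ M := fun h => H.notMem_neighborSet_self h.1
  have hcross : ∀ m ∈ M, ∀ c ∉ M, H.Adj m c := by
    intro m hm c hc
    by_cases hcy : c ∈ insert y (H.neighborSet y)
    · rcases hcy with rfl | hcy
      · exact H.adj_symm hm.1
      · obtain rfl : c = x := by_contra fun h => hc ⟨hcy, h⟩
        exact H.adj_symm (show m ∈ H.neighborSet c from htwin ▸ Set.mem_insert_of_mem y hm)
    · exact H.adj_symm (hex.sdiff_subset_neighborSet hy hx htwin hcy hm)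
  obtain ⟨m', hm', c, hc, hadj⟩ := hconn.exists_adj_of_mem_of_notMem hm hyM
  exact ((compl_adj H m' c).1 hadj).2 (hcross m' hm' c hc)

end NeighborExchange

theorem ncard_neighborSet_compl_eq_one_of_even_ncard_criticalSet [Fintype V]
    (hconn : G.Connected) (hcrit : ∀ D, IsDomSet G D → Even (criticalSet G D).ncard) (v : V) :
    (Gᶜ.neighborSet v).ncard = 1 := by
  obtain ⟨y, -, hy⟩ := Finset.univ.exists_max_image (fun v => (Gᶜ.neighborSet v).ncard)
    ⟨v, Finset.mem_univ v⟩
  have hmax : ∀ w, (Gᶜ.neighborSet w).ncard ≤ (Gᶜ.neighborSet y).ncard :=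
    fun w => hy w (Finset.mem_univ w)
  have hle := (neighborExchange_of_even_ncard_criticalSet hcrit hmax).le_one
    (by rwa [compl_compl]) rfl
  have := (Set.ncard_pos).2 (nonempty_neighborSet_compl_of_even_ncard_criticalSet hcrit v)
  have := hmax v
  omega

theorem isCocktailParty_of_ncard_neighborSet_compl_eq_one [Finite V]
    (h : ∀ v, (Gᶜ.neighborSet v).ncard = 1) : IsCocktailParty G := by
  choose f hf using fun v => Set.ncard_eq_one.1 (h v)
  have hcompl (u v : V) : Gᶜ.Adj u v ↔ f u = v := by
    rw [← mem_neighborSet, hf u, Set.mem_singleton_iff, eq_comm]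
  refine ⟨f, fun v => (hcompl _ _).1 (Gᶜ.adj_symm ((hcompl _ _).2 rfl)),
    fun v => ((hcompl _ _).2 rfl).ne.symm, fun u v => ?_⟩
  simp only [Ne, ← hcompl, compl_adj]
  by_cases huv : u = v <;> simp [huv]

namespace IsCocktailParty

theorem two_lt_card [Fintype V] (hcp : IsCocktailParty G) (hconn : G.Connected) :
    2 < Fintype.card V := by
  obtain ⟨f, -, hfne, hadj⟩ := hcp
  obtain ⟨v⟩ := hconn.nonempty
  have : Nontrivial V := ⟨⟨f v, v, hfne v⟩⟩
  obtain ⟨w, hw⟩ := hconn.preconnected.exists_adj_of_nontrivial v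
  obtain ⟨hvw, hfw⟩ := (hadj v w).1 hw
  exact Fintype.two_lt_card_iff.2 ⟨v, f v, w, (hfne v).symm, hvw, hfw⟩

theorem isDomSet_iff [Finite V] [Nonempty V] (hcp : IsCocktailParty G) :
    IsDomSet G D ↔ 2 ≤ D.ncard := by
  obtain ⟨f, hf, hfne, hadj⟩ := hcp
  have hN (u : V) : Gᶜ.neighborSet u = {f u} := by
    ext v
    rw [mem_neighborSet, compl_adj, hadj, Set.mem_singleton_iff]
    rcases eq_or_ne u v with rfl | huv
    · simpa using (hfne u).symm
    · simp [huv, eq_comm]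
  rw [← not_iff_not, not_isDomSet_iff, not_le, Nat.lt_succ_iff,
    Set.ncard_le_one_iff_subsingleton]
  simp_rw [hN]
  refine ⟨fun ⟨u, hu⟩ => Set.subsingleton_of_subset_singleton hu, fun hD => ?_⟩
  obtain rfl | ⟨x, rfl⟩ := hD.eq_empty_or_singleton
  · exact ⟨Classical.arbitrary V, Set.empty_subset _⟩
  · exact ⟨f x, by rw [hf x]⟩

theorem even_ncard_criticalSet [Finite V] [Nonempty V] (hcp : IsCocktailParty G)
    (hD : IsDomSet G D) : Even (criticalSet G D).ncard := by
  have h2 := hcp.isDomSet_iff.1 hD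
  have hcrit : criticalSet G D = {v | v ∈ D ∧ D.ncard = 2} := by
    ext v
    refine and_congr_right fun hv => ?_
    rw [hcp.isDomSet_iff, not_le, Set.ncard_sdiff_singleton_of_mem hv]
    omega
  rcases eq_or_ne D.ncard 2 with h | h <;> simp [hcrit, h]

end IsCocktailParty

end

/-- Characterization of the connected graphs with an Eulerian dominating graph: the
dominating graph of a connected graph `G` on `n ≥ 2` vertices is Eulerian iff `n` is
even and `G` is the cocktail party graph on `n ≥ 4` vertices. -/
theorem domGraph_eulerian_iff_cocktailParty {V : Type*} [Fintype V] (G : SimpleGraph V)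
    (hconn : G.Connected) (hn : 2 ≤ Fintype.card V) :
    IsEulerian (DomGraph G) ↔
      Even (Fintype.card V) ∧ 4 ≤ Fintype.card V ∧ IsCocktailParty G := by
  constructor
  · intro hE
    have : Nontrivial V := Fintype.one_lt_card_iff_nontrivial.1 hn
    have hev := even_card_of_isEulerian_domGraph hconn.preconnected.exists_adj_of_nontrivial hE
    rw [isEulerian_domGraph_iff_of_even hev] at hE
    have hcp := isCocktailParty_of_ncard_neighborSet_compl_eq_one
      (ncard_neighborSet_compl_eq_one_of_even_ncard_criticalSet hconn hE)
    have h3 := hcp.two_lt_card hconn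
    refine ⟨hev, ?_, hcp⟩
    obtain ⟨k, hk⟩ := hev
    omega
  · rintro ⟨hev, hn4, hcp⟩
    have : Nonempty V := Fintype.card_pos_iff.1 (by omega)
    exact (isEulerian_domGraph_iff_of_even hev).2 fun D => hcp.even_ncard_criticalSet
end

section
/- Let m, n, and k be integers with 1 ≤ m ≤ n and γ(K_{m,n}) < k < m + n, where K_{m,n} is the complete bipartite graph with parts of sizes m and n. Then the k-dominating graph D_k(K_{m,n}) is Eulerian if and only if either (i) m = 1, n is even, and k is odd, or (ii) m ≥ 3, m ≡ n (mod 2), and k = 3. -/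
open SimpleGraph

/-- The domination number of `G`: the minimum cardinality of a dominating set. -/
noncomputable def domNumber {V : Type*} (G : SimpleGraph V) : ℕ :=
  sInf {n | ∃ D : Set V, IsDomSet G D ∧ D.ncard = n}

/-!
The degree of a dominating set `D` in `D_k(K_{m,n})` depends only on `a = |D ∩ L|` and
`b = |D ∩ R|`: while `|D| < k` every outside vertex can be added, and whether a vertex of `D` can
be removed depends only on its side. Evaluating the parity of this degree at `(a, b) = (1, 0)`,
`(1, k - 1)` (for `m = 1`) and `(1, 1), (1, 2), (2, 1)` (for `m ≥ 2`) forces the stated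
conditions, and under them all degrees are even. Connectivity: for `m = 1` and `k < n` every vertex
of `D_k` contains the centre, so it shrinks to `{centre}`; for `k = 3 ≤ m` every non-isolated
vertex contains an edge `{x, y}` of `K_{m,n}`, and two such edges are joined through dominating
sets of size three.
-/

open Set

theorem Set.symmDiff_singleton_of_mem {α : Type*} {s : Set α} {a : α} (h : a ∈ s) :
    symmDiff s {a} = s \ {a} := by
  ext x
  by_cases hx : x = a <;> simp [mem_symmDiff, hx, h]

theorem Set.symmDiff_singleton_of_notMem {α : Type*} {s : Set α} {a : α} (h : a ∉ s) :
    symmDiff s {a} = insert a s := by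
  ext x
  by_cases hx : x = a <;> simp [mem_symmDiff, hx, h]

theorem Set.ncard_setOf_imp_and_imp {α : Type*} [Finite α] (s : Set α) (p q : Prop)
    [Decidable p] [Decidable q] :
    {x | (x ∈ s → p) ∧ (x ∉ s → q)}.ncard =
      (if p then s.ncard else 0) + (if q then Nat.card α - s.ncard else 0) := by
  have := ncard_add_ncard_compl s
  by_cases hp : p <;> by_cases hq : q <;> simp [hp, hq, ← compl_def] <;> omega

theorem Set.ncard_preimage_inl_add_ncard_preimage_inr {α β : Type*} [Finite α] [Finite β]
    (s : Set (α ⊕ β)) : (Sum.inl ⁻¹' s).ncard + (Sum.inr ⁻¹' s).ncard = s.ncard := by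
  conv_rhs => rw [← image_preimage_inl_union_image_preimage_inr s]
  rw [ncard_union_eq disjoint_image_inl_image_inr, ncard_image_of_injective _ Sum.inl_injective,
    ncard_image_of_injective _ Sum.inr_injective]

section KDomGraph

variable {V : Type*} {G : SimpleGraph V} {k : ℕ}

theorem IsDomSet.mono_s13 {D D' : Set V} (hD : IsDomSet G D) (h : D ⊆ D') : IsDomSet G D' :=
  fun v hv ↦
    let ⟨u, hu, huv⟩ := hD v fun hvD ↦ hv (h hvD)
    ⟨u, h hu, huv⟩

theorem kDomGraph_adj_iff {A B : {D // IsDomSet G D ∧ D.ncard ≤ k}} :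
    (KDomGraph G k).Adj A B ↔ ∃ v, B.1 = symmDiff A.1 {v} := by
  change (symmDiff A.1 B.1).ncard = 1 ↔ _
  rw [ncard_eq_one]
  constructor
  · rintro ⟨v, hv⟩
    exact ⟨v, by rw [← hv, symmDiff_symmDiff_cancel_left]⟩
  · rintro ⟨v, hv⟩
    exact ⟨v, by rw [hv, symmDiff_symmDiff_cancel_left]⟩

theorem ncard_neighborSet_kDomGraph (A : {D // IsDomSet G D ∧ D.ncard ≤ k}) :
    ((KDomGraph G k).neighborSet A).ncard =
      {v | IsDomSet G (symmDiff A.1 {v}) ∧ (symmDiff A.1 {v}).ncard ≤ k}.ncard := by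
  symm
  refine ncard_congr (fun v hv ↦ ⟨symmDiff A.1 {v}, hv⟩) (fun v _ ↦ kDomGraph_adj_iff.2 ⟨v, rfl⟩)
    (fun v w _ _ h ↦ ?_) (fun B hB ↦ ?_)
  · simpa using congrArg Subtype.val h
  · obtain ⟨v, hv⟩ := kDomGraph_adj_iff.1 hB
    refine ⟨v, ?_, Subtype.ext hv.symm⟩
    change IsDomSet G (symmDiff A.1 {v}) ∧ (symmDiff A.1 {v}).ncard ≤ k
    rw [← hv]
    exact B.2

theorem ncard_neighborSet_kDomGraph_eq [Finite V] (A : {D // IsDomSet G D ∧ D.ncard ≤ k}) :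
    ((KDomGraph G k).neighborSet A).ncard =
      {v | (v ∈ A.1 → IsDomSet G (A.1 \ {v})) ∧ (v ∉ A.1 → A.1.ncard < k)}.ncard := by
  rw [ncard_neighborSet_kDomGraph]
  congr 1
  ext v
  have hAk := A.2.2
  by_cases hv : v ∈ A.1
  · simp only [symmDiff_singleton_of_mem hv, ncard_sdiff_singleton_of_mem hv, mem_ofPred_eq, hv,
      not_true_eq_false, false_imp_iff, forall_const, and_true]
    exact and_iff_left (by omega)
  · simp only [symmDiff_singleton_of_notMem hv, ncard_insert_of_notMem hv, mem_ofPred_eq, hv,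
      false_imp_iff, not_false_eq_true, forall_const, true_and, Nat.succ_le_iff]
    exact and_iff_right (A.2.1.mono_s13 (subset_insert v A.1))

theorem kDomGraph_reachable_of_subset [Finite V] {A B : {D // IsDomSet G D ∧ D.ncard ≤ k}}
    (h : A.1 ⊆ B.1) : (KDomGraph G k).Reachable A B := by
  obtain ⟨B, hB, hBk⟩ := B
  induction hn : (B \ A.1).ncard generalizing B with
  | zero =>
    have hBA : B = A.1 := (sdiff_eq_empty.1 ((ncard_eq_zero).1 hn)).antisymm h
    subst hBA
    rfl
  | succ n ih =>
    obtain ⟨v, hvB, hvA⟩ : (B \ A.1).Nonempty := nonempty_of_ncard_ne_zero (by omega)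
    have hAB' : A.1 ⊆ B \ {v} := subset_sdiff_singleton h hvA
    have hB' : IsDomSet G (B \ {v}) := A.2.1.mono_s13 hAB'
    have hB'k : (B \ {v}).ncard ≤ k := (ncard_sdiff_singleton_le _ _).trans hBk
    have hadj : (KDomGraph G k).Adj ⟨B \ {v}, hB', hB'k⟩ ⟨B, hB, hBk⟩ :=
      kDomGraph_adj_iff.2 ⟨v, by
        rw [symmDiff_singleton_of_notMem (by simp), insert_sdiff_singleton, insert_eq_of_mem hvB]⟩
    refine (ih _ hB' hB'k hAB' ?_).trans hadj.reachable
    rw [sdiff_sdiff_comm, ncard_sdiff_singleton_of_mem (show v ∈ B \ A.1 from ⟨hvB, hvA⟩), hn,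
      Nat.add_sub_cancel]

theorem kDomGraph_reachable_of_subset_of_subset [Finite V]
    {A B : {D // IsDomSet G D ∧ D.ncard ≤ k}} {D : Set V} (hA : A.1 ⊆ D) (hB : B.1 ⊆ D)
    (hD : D.ncard ≤ k) : (KDomGraph G k).Reachable A B :=
  let C : {D // IsDomSet G D ∧ D.ncard ≤ k} := ⟨D, A.2.1.mono_s13 hA, hD⟩
  (kDomGraph_reachable_of_subset (B := C) hA).trans (kDomGraph_reachable_of_subset hB).symm

end KDomGraph

section CompleteBipartite

variable {α β : Type*} {k : ℕ}

theorem isDomSet_completeBipartiteGraph_of_mem {D : Set (α ⊕ β)} {x : α} {y : β}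
    (hx : Sum.inl x ∈ D) (hy : Sum.inr y ∈ D) : IsDomSet (completeBipartiteGraph α β) D := by
  rintro (a | b) -
  · exact ⟨Sum.inr y, hy, by simp⟩
  · exact ⟨Sum.inl x, hx, by simp⟩

theorem isDomSet_completeBipartiteGraph_iff [Nonempty α] [Nonempty β] {D : Set (α ⊕ β)} :
    IsDomSet (completeBipartiteGraph α β) D ↔
      ((Sum.inl ⁻¹' D).Nonempty ∧ (Sum.inr ⁻¹' D).Nonempty) ∨
        Sum.inl ⁻¹' D = univ ∨ Sum.inr ⁻¹' D = univ := by
  constructor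
  · intro hD
    rw [or_iff_not_imp_right, not_or]
    rintro ⟨hL, hR⟩
    obtain ⟨x, hx⟩ := (ne_univ_iff_exists_notMem _).1 hL
    obtain ⟨y, hy⟩ := (ne_univ_iff_exists_notMem _).1 hR
    constructor
    · obtain ⟨x' | y', hu, huy⟩ := hD (Sum.inr y) hy
      exacts [⟨x', hu⟩, by simp at huy]
    · obtain ⟨x' | y', hu, hux⟩ := hD (Sum.inl x) hx
      exacts [by simp at hux, ⟨y', hu⟩]
  · rintro (⟨⟨x, hx⟩, ⟨y, hy⟩⟩ | hL | hR)
    · exact isDomSet_completeBipartiteGraph_of_mem hx hy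
    · obtain ⟨x⟩ := ‹Nonempty α›
      rintro (a | b) hv
      · exact absurd (eq_univ_iff_forall.1 hL a) hv
      · exact ⟨Sum.inl x, eq_univ_iff_forall.1 hL x, by simp⟩
    · obtain ⟨y⟩ := ‹Nonempty β›
      rintro (a | b) hv
      · exact ⟨Sum.inr y, eq_univ_iff_forall.1 hR y, by simp⟩
      · exact absurd (eq_univ_iff_forall.1 hR b) hv

theorem isDomSet_completeBipartiteGraph_iff_ncard [Finite α] [Finite β] [Nonempty α] [Nonempty β]
    {D : Set (α ⊕ β)} :
    IsDomSet (completeBipartiteGraph α β) D ↔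
      (1 ≤ (Sum.inl ⁻¹' D).ncard ∧ 1 ≤ (Sum.inr ⁻¹' D).ncard) ∨
        (Sum.inl ⁻¹' D).ncard = Nat.card α ∨ (Sum.inr ⁻¹' D).ncard = Nat.card β := by
  rw [isDomSet_completeBipartiteGraph_iff, ← ncard_pos, ← ncard_pos, eq_univ_iff_ncard,
    eq_univ_iff_ncard]
  rfl

theorem isDomSet_completeBipartiteGraph_sdiff_inl_iff [Finite α] [Finite β] [Nonempty α]
    [Nonempty β] {D : Set (α ⊕ β)} {x : α} (hx : Sum.inl x ∈ D) :
    IsDomSet (completeBipartiteGraph α β) (D \ {Sum.inl x}) ↔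
      (2 ≤ (Sum.inl ⁻¹' D).ncard ∧ 1 ≤ (Sum.inr ⁻¹' D).ncard) ∨
        (Sum.inr ⁻¹' D).ncard = Nat.card β := by
  have hL : Sum.inl ⁻¹' (D \ {Sum.inl x}) = Sum.inl ⁻¹' D \ {x} := by ext; simp
  have hR : Sum.inr ⁻¹' (D \ {Sum.inl x}) = (Sum.inr ⁻¹' D : Set β) := by ext; simp
  have hx' : x ∈ Sum.inl ⁻¹' D := hx
  have := ncard_le_card (Sum.inl ⁻¹' D)
  have := (ncard_pos (s := Sum.inl ⁻¹' D)).2 ⟨x, hx⟩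
  rw [isDomSet_completeBipartiteGraph_iff_ncard, hL, hR, ncard_sdiff_singleton_of_mem hx']
  omega

theorem isDomSet_completeBipartiteGraph_sdiff_inr_iff [Finite α] [Finite β] [Nonempty α]
    [Nonempty β] {D : Set (α ⊕ β)} {y : β} (hy : Sum.inr y ∈ D) :
    IsDomSet (completeBipartiteGraph α β) (D \ {Sum.inr y}) ↔
      (2 ≤ (Sum.inr ⁻¹' D).ncard ∧ 1 ≤ (Sum.inl ⁻¹' D).ncard) ∨
        (Sum.inl ⁻¹' D).ncard = Nat.card α := by
  have hL : Sum.inl ⁻¹' (D \ {Sum.inr y}) = (Sum.inl ⁻¹' D : Set α) := by ext; simp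
  have hR : Sum.inr ⁻¹' (D \ {Sum.inr y}) = Sum.inr ⁻¹' D \ {y} := by ext; simp
  have hy' : y ∈ Sum.inr ⁻¹' D := hy
  have := ncard_le_card (Sum.inr ⁻¹' D)
  have := (ncard_pos (s := Sum.inr ⁻¹' D)).2 ⟨y, hy⟩
  rw [isDomSet_completeBipartiteGraph_iff_ncard, hL, hR, ncard_sdiff_singleton_of_mem hy']
  omega

theorem min_le_domNumber_completeBipartiteGraph [Finite α] [Finite β] [Nonempty α] [Nonempty β] :
    min (Nat.card α) (min (Nat.card β) 2) ≤ domNumber (completeBipartiteGraph α β) := by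
  have hne : {n | ∃ D, IsDomSet (completeBipartiteGraph α β) D ∧ D.ncard = n}.Nonempty :=
    ⟨_, univ, fun v hv ↦ (hv (mem_univ v)).elim, rfl⟩
  obtain ⟨D, hD, hDn⟩ := Nat.sInf_mem hne
  rw [domNumber, ← hDn, ← ncard_preimage_inl_add_ncard_preimage_inr]
  rw [isDomSet_completeBipartiteGraph_iff_ncard] at hD
  omega

theorem exists_ncard_preimage_inl_eq_ncard_preimage_inr_eq [Finite α] [Finite β] {a b : ℕ}
    (ha : a ≤ Nat.card α) (hb : b ≤ Nat.card β) :
    ∃ D : Set (α ⊕ β), (Sum.inl ⁻¹' D).ncard = a ∧ (Sum.inr ⁻¹' D).ncard = b := by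
  obtain ⟨s, -, hs⟩ := exists_subset_card_eq (s := (univ : Set α)) (n := a) (by rwa [ncard_univ])
  obtain ⟨t, -, ht⟩ := exists_subset_card_eq (s := (univ : Set β)) (n := b) (by rwa [ncard_univ])
  have hst := sumEquiv.apply_symm_apply (s, t)
  simp only [sumEquiv_apply, Prod.mk.injEq] at hst
  exact ⟨sumEquiv.symm (s, t), by rw [hst.1, hs], by rw [hst.2, ht]⟩

/-- The degree in `D_k(K_{p,q})` of a dominating set with `a` vertices on the `p`-side and `b` on
the `q`-side: every outside vertex can be added while there is room, and on each side either all
or none of the chosen vertices can be removed. -/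
def bipartiteKDomDegree (p q k a b : ℕ) : ℕ :=
  (if a + b < k then (p - a) + (q - b) else 0) +
    (if (2 ≤ a ∧ 1 ≤ b) ∨ b = q then a else 0) + (if (2 ≤ b ∧ 1 ≤ a) ∨ a = p then b else 0)

theorem ncard_neighborSet_kDomGraph_completeBipartiteGraph [Finite α] [Finite β] [Nonempty α]
    [Nonempty β] (A : {D // IsDomSet (completeBipartiteGraph α β) D ∧ D.ncard ≤ k}) :
    ((KDomGraph (completeBipartiteGraph α β) k).neighborSet A).ncard =
      bipartiteKDomDegree (Nat.card α) (Nat.card β) k (Sum.inl ⁻¹' A.1).ncard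
        (Sum.inr ⁻¹' A.1).ncard := by
  set a := (Sum.inl ⁻¹' A.1).ncard
  set b := (Sum.inr ⁻¹' A.1).ncard
  have hA : A.1.ncard = a + b := (ncard_preimage_inl_add_ncard_preimage_inr A.1).symm
  rw [ncard_neighborSet_kDomGraph_eq, ← ncard_preimage_inl_add_ncard_preimage_inr]
  have hL : Sum.inl ⁻¹' {v | (v ∈ A.1 → IsDomSet (completeBipartiteGraph α β) (A.1 \ {v})) ∧
      (v ∉ A.1 → A.1.ncard < k)} =
      {x | (x ∈ Sum.inl ⁻¹' A.1 → (2 ≤ a ∧ 1 ≤ b) ∨ b = Nat.card β) ∧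
        (x ∉ Sum.inl ⁻¹' A.1 → a + b < k)} := by
    ext x
    exact and_congr (imp_congr_right isDomSet_completeBipartiteGraph_sdiff_inl_iff)
      (by rw [hA]; rfl)
  have hR : Sum.inr ⁻¹' {v | (v ∈ A.1 → IsDomSet (completeBipartiteGraph α β) (A.1 \ {v})) ∧
      (v ∉ A.1 → A.1.ncard < k)} =
      {y | (y ∈ Sum.inr ⁻¹' A.1 → (2 ≤ b ∧ 1 ≤ a) ∨ a = Nat.card α) ∧
        (y ∉ Sum.inr ⁻¹' A.1 → a + b < k)} := by
    ext y
    exact and_congr (imp_congr_right isDomSet_completeBipartiteGraph_sdiff_inr_iff)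
      (by rw [hA]; rfl)
  rw [hL, hR, ncard_setOf_imp_and_imp, ncard_setOf_imp_and_imp, bipartiteKDomDegree]
  split_ifs <;> omega

theorem forall_even_ncard_neighborSet_kDomGraph_completeBipartiteGraph_iff [Finite α] [Finite β]
    [Nonempty α] [Nonempty β] :
    (∀ A, Even ((KDomGraph (completeBipartiteGraph α β) k).neighborSet A).ncard) ↔
      ∀ a b, a ≤ Nat.card α → b ≤ Nat.card β →
        ((1 ≤ a ∧ 1 ≤ b) ∨ a = Nat.card α ∨ b = Nat.card β) → a + b ≤ k →
          Even (bipartiteKDomDegree (Nat.card α) (Nat.card β) k a b) := by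
  constructor
  · intro h a b ha hb hdom hab
    obtain ⟨D, hDa, hDb⟩ := exists_ncard_preimage_inl_eq_ncard_preimage_inr_eq ha hb
    have hD : IsDomSet (completeBipartiteGraph α β) D := by
      rwa [isDomSet_completeBipartiteGraph_iff_ncard, hDa, hDb]
    have hDk : D.ncard ≤ k := by rwa [← ncard_preimage_inl_add_ncard_preimage_inr, hDa, hDb]
    simpa only [ncard_neighborSet_kDomGraph_completeBipartiteGraph, hDa, hDb] using h ⟨D, hD, hDk⟩
  · intro h A
    rw [ncard_neighborSet_kDomGraph_completeBipartiteGraph]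
    exact h _ _ (ncard_le_card _) (ncard_le_card _)
      (isDomSet_completeBipartiteGraph_iff_ncard.1 A.2.1)
      ((ncard_preimage_inl_add_ncard_preimage_inr A.1).trans_le A.2.2)

theorem preconnected_kDomGraph_completeBipartiteGraph_of_unique [Unique α] [Finite β]
    (hk : 1 ≤ k) (hkβ : k < Nat.card β) :
    (KDomGraph (completeBipartiteGraph α β) k).Preconnected := by
  have : Nonempty β := Finite.card_pos_iff.1 (by omega)
  have hmem (A : {D // IsDomSet (completeBipartiteGraph α β) D ∧ D.ncard ≤ k}) :
      {Sum.inl default} ⊆ A.1 := by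
    have hdom := isDomSet_completeBipartiteGraph_iff_ncard.1 A.2.1
    have hA := (ncard_preimage_inl_add_ncard_preimage_inr A.1).trans_le A.2.2
    have := Nat.card_unique (α := α)
    obtain ⟨x, hx⟩ : (Sum.inl ⁻¹' A.1).Nonempty := nonempty_of_ncard_ne_zero (by omega)
    rwa [singleton_subset_iff, ← Unique.eq_default x]
  have hC : IsDomSet (completeBipartiteGraph α β) {Sum.inl default} := by
    rintro (a | b) hv
    · exact absurd (by rw [Unique.eq_default a]; rfl) hv
    · exact ⟨Sum.inl default, rfl, by simp⟩
  let C : {D // IsDomSet (completeBipartiteGraph α β) D ∧ D.ncard ≤ k} :=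
    ⟨{Sum.inl default}, hC, by rwa [ncard_singleton]⟩
  intro A B
  exact (kDomGraph_reachable_of_subset (A := C) (hmem A)).symm.trans
    (kDomGraph_reachable_of_subset (hmem B))

theorem nonempty_preimages_of_kDomGraph_three_adj [Finite α] [Finite β]
    (hα : 3 ≤ Nat.card α) (hβ : 3 ≤ Nat.card β)
    {A B : {D // IsDomSet (completeBipartiteGraph α β) D ∧ D.ncard ≤ 3}}
    (h : (KDomGraph (completeBipartiteGraph α β) 3).Adj A B) :
    (Sum.inl ⁻¹' A.1).Nonempty ∧ (Sum.inr ⁻¹' A.1).Nonempty := by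
  have : Nonempty α := Finite.card_pos_iff.1 (by omega)
  have : Nonempty β := Finite.card_pos_iff.1 (by omega)
  have hdeg : ((KDomGraph (completeBipartiteGraph α β) 3).neighborSet A).ncard ≠ 0 :=
    ncard_ne_zero_of_mem (show B ∈ _ from h)
  -- a dominating set missing a side is the whole other side: too big to grow, unable to shrink
  rw [ncard_neighborSet_kDomGraph_completeBipartiteGraph, bipartiteKDomDegree] at hdeg
  have hdom := isDomSet_completeBipartiteGraph_iff_ncard.1 A.2.1
  have hA := (ncard_preimage_inl_add_ncard_preimage_inr A.1).trans_le A.2.2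
  rw [← ncard_pos, ← ncard_pos]
  split_ifs at hdeg <;> omega

theorem kDomGraph_completeBipartiteGraph_reachable_of_mem [Finite α] [Finite β] (hk : 3 ≤ k)
    {A B : {D // IsDomSet (completeBipartiteGraph α β) D ∧ D.ncard ≤ k}} {x x' : α} {y y' : β}
    (hx : Sum.inl x ∈ A.1) (hy : Sum.inr y ∈ A.1) (hx' : Sum.inl x' ∈ B.1)
    (hy' : Sum.inr y' ∈ B.1) : (KDomGraph (completeBipartiteGraph α β) k).Reachable A B := by
  have hcard (u v w : α ⊕ β) : ({u, v, w} : Set (α ⊕ β)).ncard ≤ k :=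
    ((ncard_insert_le _ _).trans (Nat.succ_le_succ ((ncard_insert_le _ _).trans (by simp)))).trans
      hk
  let P (x : α) (y : β) : {D // IsDomSet (completeBipartiteGraph α β) D ∧ D.ncard ≤ k} :=
    ⟨{Sum.inl x, Sum.inr y}, isDomSet_completeBipartiteGraph_of_mem (mem_insert _ _)
      (mem_insert_of_mem _ (mem_singleton _)),
      (ncard_insert_le _ _).trans (by simp; omega)⟩
  have hAP : (KDomGraph _ k).Reachable A (P x y) :=
    (kDomGraph_reachable_of_subset (A := P x y) (insert_subset hx (singleton_subset_iff.2 hy))).symm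
  have hPP : (KDomGraph _ k).Reachable (P x y) (P x y') :=
    kDomGraph_reachable_of_subset_of_subset (D := {Sum.inl x, Sum.inr y, Sum.inr y'})
      (by simp [P]) (by simp [P]) (hcard _ _ _)
  have hPP' : (KDomGraph _ k).Reachable (P x y') (P x' y') :=
    kDomGraph_reachable_of_subset_of_subset (D := {Sum.inl x, Sum.inl x', Sum.inr y'})
      (by simp [P]) (by simp [P]) (hcard _ _ _)
  have hPB : (KDomGraph _ k).Reachable (P x' y') B :=
    kDomGraph_reachable_of_subset (B := B) (insert_subset hx' (singleton_subset_iff.2 hy'))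
  exact hAP.trans (hPP.trans (hPP'.trans hPB))

end CompleteBipartite

theorem forall_even_bipartiteKDomDegree_iff {m n k : ℕ} (hm : 1 ≤ m) (hmn : m ≤ n)
    (hk1 : min m (min n 2) < k) (hk2 : k < m + n) :
    (∀ a b, a ≤ m → b ≤ n → ((1 ≤ a ∧ 1 ≤ b) ∨ a = m ∨ b = n) → a + b ≤ k →
        Even (bipartiteKDomDegree m n k a b)) ↔
      (m = 1 ∧ Even n ∧ Odd k) ∨ (3 ≤ m ∧ m % 2 = n % 2 ∧ k = 3) := by
  simp only [bipartiteKDomDegree, Nat.even_iff, Nat.odd_iff]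
  constructor
  · intro h
    rcases (by omega : m = 1 ∨ 2 ≤ m) with rfl | hm2
    · have h10 := h 1 0 le_rfl (by omega) (by omega) (by omega)
      rw [if_pos (by omega), if_neg (by omega), if_pos (by omega)] at h10
      have h1k := h 1 (k - 1) le_rfl (by omega) (by omega) (by omega)
      rw [if_neg (by omega), if_neg (by omega), if_pos (by omega)] at h1k
      omega
    · have h11 := h 1 1 (by omega) (by omega) (by omega) (by omega)
      rw [if_pos (by omega), if_neg (by omega), if_neg (by omega)] at h11
      have hk : k = 3 := by
        by_contra hk
        have h12 := h 1 2 (by omega) (by omega) (by omega) (by omega)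
        rw [if_pos (by omega), if_neg (by omega), if_pos (by omega)] at h12
        omega
      have hm3 : 3 ≤ m := by
        by_contra hm3
        have h21 := h 2 1 (by omega) (by omega) (by omega) (by omega)
        rw [if_neg (by omega), if_pos (by omega), if_pos (by omega)] at h21
        omega
      omega
  · intro hc a b ha hb hdom hab
    split_ifs <;> omega

/-- For `1 ≤ m ≤ n` and `γ(K_{m,n}) < k < m + n`, the `k`-dominating graph of the
complete bipartite graph `K_{m,n}` is Eulerian iff `m = 1`, `n` is even and `k` is odd,
or `m ≥ 3`, `m ≡ n (mod 2)` and `k = 3`. -/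
theorem kDomGraph_completeBipartite_eulerian_iff (m n k : ℕ) (hm : 1 ≤ m) (hmn : m ≤ n)
    (hk1 : domNumber (completeBipartiteGraph (Fin m) (Fin n)) < k) (hk2 : k < m + n) :
    IsEulerian (KDomGraph (completeBipartiteGraph (Fin m) (Fin n)) k) ↔
      (m = 1 ∧ Even n ∧ Odd k) ∨ (3 ≤ m ∧ m % 2 = n % 2 ∧ k = 3) := by
  have : Nonempty (Fin m) := ⟨⟨0, hm⟩⟩
  have : Nonempty (Fin n) := ⟨⟨0, by omega⟩⟩
  have hγ := min_le_domNumber_completeBipartiteGraph (α := Fin m) (β := Fin n)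
  rw [Nat.card_fin, Nat.card_fin] at hγ
  unfold IsEulerian
  rw [forall_even_ncard_neighborSet_kDomGraph_completeBipartiteGraph_iff, Nat.card_fin,
    Nat.card_fin, forall_even_bipartiteKDomDegree_iff hm hmn (hγ.trans_lt hk1) hk2]
  refine and_iff_left_of_imp ?_
  rintro (⟨rfl, hn, hk⟩ | ⟨hm3, -, rfl⟩) u v x y huv hxy
  · have := Nat.even_iff.1 hn
    have := Nat.odd_iff.1 hk
    exact preconnected_kDomGraph_completeBipartiteGraph_of_unique (by omega)
      (by rw [Nat.card_fin]; omega) u x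
  · have hα : 3 ≤ Nat.card (Fin m) := by rwa [Nat.card_fin]
    have hβ : 3 ≤ Nat.card (Fin n) := by rw [Nat.card_fin]; omega
    obtain ⟨⟨a, ha⟩, ⟨b, hb⟩⟩ := nonempty_preimages_of_kDomGraph_three_adj hα hβ huv
    obtain ⟨⟨a', ha'⟩, ⟨b', hb'⟩⟩ := nonempty_preimages_of_kDomGraph_three_adj hα hβ hxy
    exact kDomGraph_completeBipartiteGraph_reachable_of_mem le_rfl ha hb ha' hb'
end
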